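/- arXiv:2002.08738 — 9 statements merged into one kernel-verified Lean document; each statement's English description precedes it below -/
import Mathlib

section
/- Let (C, R, 𝓡) be a big-step semantics and 𝓡^tr its trace semantics. If ⊢_{𝓡^tr} c ⇒ t holds, then the following are equivalent: (1) ⊢_{𝓡^tr} c ⇒ t holds by a finite derivation; (2) t = t' · r for some finite trace t' ∈ C* and some result r ∈ R; (3) t is finite. -/
namespace BigStepMeta

universe u

/-- A judgment `c ⇒ r`: a configuration together with a result. -/
structure Judg (C : Type u) where
  conf : C
  res  : C

/-- A big-step rule: a conclusion configuration plus a nonempty finite list of premises.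
The last premise is the continuation; the conclusion judgment is `concl ⇒ (last premise).res`. -/
structure Rule (C : Type u) where
  concl : C
  premises : List (Judg C)
  ne : premises ≠ []

/-- The last premise (continuation) of a rule. -/
def Rule.lastJ {C : Type u} (ρ : Rule C) : Judg C := ρ.premises.getLast ρ.ne

/-- A big-step semantics `(C, R, 𝓡)`: configurations `C`, results `R ⊆ C`, rules `𝓡`. -/
structure BigStep (C : Type u) where
  R : Set C
  Rules : Set (Rule C)
  concl_not_res : ∀ ρ ∈ Rules, ρ.concl ∉ R
  prem_res : ∀ ρ ∈ Rules, ∀ j ∈ ρ.premises, j.res ∈ R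

variable {C : Type u}

/-- Condition BP: the number of premises of rules is bounded. -/
def BigStep.BP (S : BigStep C) : Prop :=
  ∃ b : ℕ, ∀ ρ ∈ S.Rules, ρ.premises.length ≤ b

/-- Inductive derivability `⊢_𝓡 c ⇒ r`: there is a finite proof tree.
For each result `r ∈ R` there is an implicit axiom `r ⇒ r`. -/
inductive Derives (S : BigStep C) : C → C → Prop
  | ax {r : C} : r ∈ S.R → Derives S r r
  | rule {ρ : Rule C} : ρ ∈ S.Rules →
      (∀ j ∈ ρ.premises, Derives S j.conf j.res) →
      Derives S ρ.concl ρ.lastJ.res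

/-! ## Traces -/

/-- A finite or infinite trace of configurations. -/
inductive Trace (C : Type u) where
  | fin : List C → Trace C
  | inf : (ℕ → C) → Trace C

/-- Concatenation of a finite list with an infinite sequence. -/
def appendInf (l : List C) (f : ℕ → C) : ℕ → C :=
  fun n => if h : n < l.length then l.get ⟨n, h⟩ else f (n - l.length)

/-- The finite trace `t_k · R(j_k)` associated to a premise and a chosen finite trace. -/
def finPart (p : Judg C × List C) : List C := p.2 ++ [p.1.res]

/-- The rule instances of the trace semantics `𝓡^tr`: a conclusion `c ⇒ t`
together with its list of premises. -/
inductive TrRule (S : BigStep C) : C → Trace C → List (C × Trace C) → Prop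
  | ax {r : C} : r ∈ S.R → TrRule S r (.fin [r]) []
  | intro {ρ : Rule C} {ts : List (List C)} :
      ρ ∈ S.Rules → ts.length = ρ.premises.length →
      TrRule S ρ.concl
        (.fin (ρ.concl :: ((ρ.premises.zip ts).map finPart).flatten))
        ((ρ.premises.zip ts).map (fun p => (p.1.conf, Trace.fin (finPart p))))
  | div {ρ : Rule C} {pre rest : List (Judg C)} {j : Judg C} {ts : List (List C)} {f : ℕ → C} :
      ρ ∈ S.Rules → ρ.premises = pre ++ j :: rest →
      ts.length = pre.length →
      TrRule S ρ.concl
        (.inf (appendInf (ρ.concl :: ((pre.zip ts).map finPart).flatten) f))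
        (((pre.zip ts).map (fun p => (p.1.conf, Trace.fin (finPart p)))) ++
          [(j.conf, Trace.inf f)])

/-- `⊢_{𝓡^tr} c ⇒ t` by a finite derivation (inductive interpretation of `𝓡^tr`). -/
inductive TrDerivesFin (S : BigStep C) : C → Trace C → Prop
  | step {c : C} {t : Trace C} {prems : List (C × Trace C)} :
      TrRule S c t prems →
      (∀ p ∈ prems, TrDerivesFin S p.1 p.2) →
      TrDerivesFin S c t

/-- `⊢_{𝓡^tr} c ⇒ t`: coinductive interpretation of `𝓡^tr`, i.e. existence of a possibly
infinite proof tree, expressed as membership in some backward-closed (consistent) relation. -/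
def TrDerives (S : BigStep C) (c : C) (t : Trace C) : Prop :=
  ∃ X : C → Trace C → Prop,
    (∀ c' t', X c' t' → ∃ prems, TrRule S c' t' prems ∧ ∀ p ∈ prems, X p.1 p.2) ∧
    X c t

/-! ## Wrong -/

/-- There is a rule with conclusion configuration `c`, first premises `pre`, whose next
premise has configuration `c'` and result `r` (i.e. a rule `ρ' ∼ᵢ ρ` with `R(ρ', i) = r`). -/
def HasContinuation (S : BigStep C) (c : C) (pre : List (Judg C)) (c' r : C) : Prop :=
  ∃ ρ' ∈ S.Rules, ∃ j' : Judg C, ∃ rest' : List (Judg C),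
    ρ'.premises = pre ++ j' :: rest' ∧ ρ'.concl = c ∧ j'.conf = c' ∧ j'.res = r

/-- Derivability in the wrong semantics `𝓡^wr`; `none` plays the role of `wrong`. -/
inductive DerivesW (S : BigStep C) : C → Option C → Prop
  | ax {r : C} : r ∈ S.R → DerivesW S r (some r)
  | rule {ρ : Rule C} : ρ ∈ S.Rules →
      (∀ j ∈ ρ.premises, DerivesW S j.conf (some j.res)) →
      DerivesW S ρ.concl (some ρ.lastJ.res)
  | wrong_intro {ρ : Rule C} {pre rest : List (Judg C)} {j : Judg C} {r : C} :
      ρ ∈ S.Rules → ρ.premises = pre ++ j :: rest → r ∈ S.R →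
      ¬ HasContinuation S ρ.concl pre j.conf r →
      (∀ j' ∈ pre, DerivesW S j'.conf (some j'.res)) →
      DerivesW S j.conf (some r) →
      DerivesW S ρ.concl none
  | wrong_ax {c : C} : c ∉ S.R → (¬ ∃ ρ ∈ S.Rules, ρ.concl = c) →
      DerivesW S c none
  | wrong_prop {ρ : Rule C} {pre rest : List (Judg C)} {j : Judg C} :
      ρ ∈ S.Rules → ρ.premises = pre ++ j :: rest →
      (∀ j' ∈ pre, DerivesW S j'.conf (some j'.res)) →
      DerivesW S j.conf none →
      DerivesW S ρ.concl none

/-! ## Indexed predicates and soundness conditions -/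

variable {I : Type u}

/-- `c ∈ Π`, i.e. `c ∈ Π_ι` for some index `ι`. -/
def InPred (P : I → Set C) (c : C) : Prop := ∃ i : I, c ∈ P i

/-- Condition S1 (local preservation). -/
def LocalPres (S : BigStep C) (P : I → Set C) : Prop :=
  ∀ ρ ∈ S.Rules, ∀ i : I, ρ.concl ∈ P i →
    ∃ f : ℕ → I, f (ρ.premises.length - 1) = i ∧
      ∀ (k : ℕ) (hk : k < ρ.premises.length),
        (∀ (h : ℕ) (hh : h < k), (ρ.premises.get ⟨h, hh.trans hk⟩).res ∈ P (f h)) →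
        (ρ.premises.get ⟨k, hk⟩).conf ∈ P (f k)

/-- Condition S2 (∃-progress). -/
def ExProgress (S : BigStep C) (P : I → Set C) : Prop :=
  ∀ c : C, InPred P c → c ∉ S.R → ∃ ρ ∈ S.Rules, ρ.concl = c

/-- Condition S3 (∀-progress). -/
def AllProgress (S : BigStep C) (P : I → Set C) : Prop :=
  ∀ ρ ∈ S.Rules, InPred P ρ.concl →
    ∀ (pre : List (Judg C)) (j : Judg C) (rest : List (Judg C)),
      ρ.premises = pre ++ j :: rest →
      (∀ j' ∈ pre, Derives S j'.conf j'.res) →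
      ∀ r ∈ S.R, Derives S j.conf r →
      HasContinuation S ρ.concl pre j.conf r

/-- Condition S4 (progress-may). -/
def ProgressMay (S : BigStep C) (P : I → Set C) : Prop :=
  ∀ c : C, InPred P c → c ∉ S.R →
    ∃ ρ ∈ S.Rules, ρ.concl = c ∧
      ∀ (pre : List (Judg C)) (j : Judg C) (rest : List (Judg C)),
        ρ.premises = pre ++ j :: rest →
        (∀ j' ∈ pre, Derives S j'.conf j'.res) →
        ¬ Derives S j.conf j.res →
        ¬ ∃ r : C, Derives S j.conf r

/-! ## Partial evaluation: the inference system `𝓡^?` -/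

/-- The rule instances of the partial-evaluation semantics `𝓡^?`; `none` plays the role
of the unknown result `?`. -/
inductive URule (S : BigStep C) : C → Option C → List (C × Option C) → Prop
  | ax {r : C} : r ∈ S.R → URule S r (some r) []
  | rule {ρ : Rule C} : ρ ∈ S.Rules →
      URule S ρ.concl (some ρ.lastJ.res) (ρ.premises.map (fun j => (j.conf, some j.res)))
  | unk_ax {c : C} : URule S c none []
  | unk {ρ : Rule C} {pre rest : List (Judg C)} {j : Judg C} {r : C} :
      ρ ∈ S.Rules → ρ.premises = pre ++ j :: rest → r ∈ S.R →
      URule S ρ.concl none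
        (pre.map (fun j' => (j'.conf, some j'.res)) ++ [(j.conf, some r)])
  | prop {ρ : Rule C} {pre rest : List (Judg C)} {j : Judg C} :
      ρ ∈ S.Rules → ρ.premises = pre ++ j :: rest →
      URule S ρ.concl none
        (pre.map (fun j' => (j'.conf, some j'.res)) ++ [(j.conf, none)])

/-! ## Possibly infinite trees as partial functions -/

/-- A (possibly infinite) tree labelled by judgments `c ⇒ u`, `u ∈ R ∪ {?}`, given as a
partial function on addresses (lists of positive naturals), with nonempty domain closed
under parents and left siblings. -/
structure PTree (C : Type u) where
  label : List ℕ+ → Option (C × Option C)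
  root_def : label [] ≠ none
  closed : ∀ (α : List ℕ+) (n : ℕ+), label (α ++ [n]) ≠ none → label α ≠ none
  siblings : ∀ (α : List ℕ+) (n k : ℕ+), k ≤ n →
    label (α ++ [n]) ≠ none → label (α ++ [k]) ≠ none

/-- `τ` is a proof tree in `𝓡^?`: at each node, the children are exactly the premises
of a rule of `𝓡^?` with the node's judgment as conclusion. -/
def PTree.IsProofTree (S : BigStep C) (τ : PTree C) : Prop :=
  ∀ (α : List ℕ+) (p : C × Option C), τ.label α = some p →
    ∃ prems : List (C × Option C), URule S p.1 p.2 prems ∧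
      ∀ n : ℕ+, τ.label (α ++ [n]) = prems[(n : ℕ) - 1]?

/-- The order `τ ⊑ τ'` on trees: larger domain, same configurations, and equal subtrees
at nodes whose result is already known (in `R`). -/
def PTree.LE (τ τ' : PTree C) : Prop :=
  ∀ (α : List ℕ+) (p : C × Option C), τ.label α = some p →
    ∃ p' : C × Option C, τ'.label α = some p' ∧ p.1 = p'.1 ∧
      (p.2 ≠ none → ∀ β : List ℕ+, τ.label (α ++ β) = τ'.label (α ++ β))

/-- A tree is finite if its domain is finite. -/
def PTree.Finite (τ : PTree C) : Prop := {α : List ℕ+ | τ.label α ≠ none}.Finite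

/-- A (typically infinite) proof tree is well-formed if at every level there is a node
labelled by an incomplete judgment, and subtrees rooted at complete judgments are finite. -/
def PTree.WellFormed (τ : PTree C) : Prop :=
  (∀ n : ℕ, ∃ (α : List ℕ+) (c : C), α.length = n ∧ τ.label α = some (c, none)) ∧
  (∀ (α : List ℕ+) (c r : C), τ.label α = some (c, some r) →
    {β : List ℕ+ | τ.label (α ++ β) ≠ none}.Finite)

/-! ## Finite proof trees and the reduction relation -/

/-- Finite trees labelled by judgments `c ⇒ u`, `u ∈ R ∪ {?}` (with `none` playing `?`). -/
inductive FTree (C : Type u) where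
  | node : C → Option C → List (FTree C) → FTree C

/-- The judgment at the root of a finite tree. -/
def FTree.judg : FTree C → C × Option C
  | .node c u _ => (c, u)

/-- `τ` is a finite proof tree in the partial-evaluation semantics `𝓡^?`. -/
inductive IsFPT (S : BigStep C) : FTree C → Prop
  | mk {c : C} {u : Option C} {l : List (FTree C)} :
      URule S c u (l.map FTree.judg) →
      (∀ τ ∈ l, IsFPT S τ) →
      IsFPT S (.node c u l)

/-- A finite proof tree is complete if all its judgments have results in `R`. -/
inductive FTree.Complete (S : BigStep C) : FTree C → Prop
  | mk {c : C} {r : C} {l : List (FTree C)} :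
      r ∈ S.R →
      (∀ τ ∈ l, FTree.Complete S τ) →
      FTree.Complete S (.node c (some r) l)

/-- The order `τ ⊑ τ'` on finite trees. -/
inductive FTreeLE : FTree C → FTree C → Prop
  | done {c r : C} {l : List (FTree C)} :
      FTreeLE (.node c (some r) l) (.node c (some r) l)
  | step {c : C} {u' : Option C} {l l₁ l₂ : List (FTree C)} :
      l.length = l₁.length →
      (∀ p ∈ l.zip l₁, FTreeLE p.1 p.2) →
      FTreeLE (.node c none l) (.node c u' (l₁ ++ l₂))

/-- The one-step reduction relation `⇝` on finite proof trees in `𝓡^?`. -/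
inductive Red (S : BigStep C) : FTree C → FTree C → Prop
  /-- The axiom `r ⇒ ?` (with `r ∈ R`) steps to the axiom `r ⇒ r`. -/
  | res {r : C} : r ∈ S.R → Red S (.node r none []) (.node r (some r) [])
  /-- The axiom `c ⇒ ?` steps, for a rule `ρ` with conclusion configuration `c`,
  to the tree applying `prop(ρ,1,?)` to the leaf `c' ⇒ ?`, `c'` the first premise
  configuration of `ρ`. -/
  | start {ρ : Rule C} {j : Judg C} {rest : List (Judg C)} :
      ρ ∈ S.Rules → ρ.premises = j :: rest →
      Red S (.node ρ.concl none []) (.node ρ.concl none [.node j.conf none []])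
  /-- A tree with root `c ⇒ ?` whose children are the first `i` premises of some
  `ρ' ∈ 𝓡` (with `#ρ' = i`, last premise result `r`) steps to the same tree with
  root `c ⇒ r`. -/
  | complete {ρ' : Rule C} {pre : List (Judg C)} {j' : Judg C} {l : List (FTree C)} :
      ρ' ∈ S.Rules → ρ'.premises = pre ++ [j'] →
      l.map FTree.judg = pre.map (fun j => (j.conf, some j.res)) ++ [(j'.conf, some j'.res)] →
      Red S (.node ρ'.concl none l) (.node ρ'.concl (some j'.res) l)
  /-- A tree with root `c ⇒ ?` whose children are the first `i` premises of some
  `ρ' ∈ 𝓡` having an `(i+1)`-th premise steps by adding the leaf for that premise's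
  configuration. -/
  | next {ρ' : Rule C} {pre rest : List (Judg C)} {j' j'' : Judg C} {l : List (FTree C)} :
      ρ' ∈ S.Rules → ρ'.premises = pre ++ j' :: j'' :: rest →
      l.map FTree.judg = pre.map (fun j => (j.conf, some j.res)) ++ [(j'.conf, some j'.res)] →
      Red S (.node ρ'.concl none l) (.node ρ'.concl none (l ++ [.node j''.conf none []]))
  /-- Propagation: a step of the last child is propagated. -/
  | inner {c : C} {l : List (FTree C)} {τ τ' : FTree C} :
      Red S τ τ' →
      Red S (.node c none (l ++ [τ])) (.node c none (l ++ [τ']))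


lemma flatten_map_finPart_eq_append_res {ps : List (Judg C × List C)} (hne : ps ≠ []) :
    ∃ t' : List C, ∃ q ∈ ps, (ps.map finPart).flatten = t' ++ [q.1.res] := by
  obtain ⟨zs, q, rfl⟩ := (List.eq_nil_or_concat ps).resolve_left hne
  exact ⟨(zs.map finPart).flatten ++ q.2, q, by simp, by simp [finPart]⟩

namespace TrRule

variable {S : BigStep C} {c : C} {l : List C} {prems : List (C × Trace C)}

theorem exists_eq_append_res (h : TrRule S c (.fin l) prems) :
    ∃ (t' : List C) (r : C), r ∈ S.R ∧ l = t' ++ [r] := by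
  cases h with
  | ax hr => exact ⟨[], _, hr, rfl⟩
  | @intro ρ ts hρ hlen =>
    have hne : ρ.premises.zip ts ≠ [] := by
      rw [← List.length_pos_iff, List.length_zip, hlen, Nat.min_self, List.length_pos_iff]
      exact ρ.ne
    obtain ⟨t', q, hq, heq⟩ := flatten_map_finPart_eq_append_res hne
    exact ⟨ρ.concl :: t', q.1.res, S.prem_res ρ hρ q.1 (List.of_mem_zip hq).1, by simp [heq]⟩

theorem length_lt_of_mem (h : TrRule S c (.fin l) prems) {p : C × Trace C} (hp : p ∈ prems) :
    ∃ lp : List C, p.2 = .fin lp ∧ lp.length < l.length := by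
  cases h with
  | ax => simp at hp
  | @intro ρ ts =>
    obtain ⟨q, hq, rfl⟩ := List.mem_map.mp hp
    have hsub : (finPart q).Sublist (((ρ.premises.zip ts).map finPart).flatten) :=
      List.sublist_flatten_of_mem (List.mem_map_of_mem hq)
    exact ⟨finPart q, rfl, Nat.lt_succ_of_le hsub.length_le⟩

end TrRule

theorem TrDerivesFin.exists_eq_fin {S : BigStep C} {c : C} {t : Trace C}
    (h : TrDerivesFin S c t) : ∃ l : List C, t = .fin l := by
  induction h with
  | step hrule _ ih =>
    cases hrule with
    | ax => exact ⟨_, rfl⟩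
    | intro => exact ⟨_, rfl⟩
    | div =>
      obtain ⟨_, hl⟩ := ih _ (List.mem_append_right _ (List.mem_singleton_self _))
      cases hl

theorem TrDerives.exists_trRule {S : BigStep C} {c : C} {t : Trace C} (h : TrDerives S c t) :
    ∃ prems, TrRule S c t prems ∧ ∀ p ∈ prems, TrDerives S p.1 p.2 := by
  obtain ⟨X, hX, hc⟩ := h
  obtain ⟨prems, hrule, hprems⟩ := hX c t hc
  exact ⟨prems, hrule, fun p hp => ⟨X, hX, hprems p hp⟩⟩

/-- Premises of a rule with a finite trace carry strictly shorter traces, so a possibly infinite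
derivation of a finite trace is well founded. -/
theorem TrDerives.trDerivesFin {S : BigStep C} {c : C} {l : List C}
    (h : TrDerives S c (.fin l)) : TrDerivesFin S c (.fin l) := by
  induction hn : l.length using Nat.strong_induction_on generalizing c l with
  | _ n ih =>
    obtain ⟨prems, hrule, hprems⟩ := h.exists_trRule
    refine .step hrule fun ⟨c', t'⟩ hp => ?_
    obtain ⟨lp, rfl, hlt⟩ := hrule.length_lt_of_mem hp
    exact ih _ (hn ▸ hlt) (hprems _ hp) rfl

theorem statement0_general {C : Type u} (S : BigStep C) (c : C) (t : Trace C)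
    (h : TrDerives S c t) :
    (TrDerivesFin S c t ↔ ∃ (t' : List C) (r : C), r ∈ S.R ∧ t = Trace.fin (t' ++ [r])) ∧
    ((∃ (t' : List C) (r : C), r ∈ S.R ∧ t = Trace.fin (t' ++ [r])) ↔
      ∃ l : List C, t = Trace.fin l) := by
  have fin_of_trDerivesFin : TrDerivesFin S c t → ∃ l : List C, t = .fin l :=
    TrDerivesFin.exists_eq_fin
  have trDerivesFin_of_fin : (∃ l : List C, t = .fin l) → TrDerivesFin S c t := by
    rintro ⟨l, rfl⟩
    exact h.trDerivesFin
  have ends_in_res_of_fin :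
      (∃ l : List C, t = .fin l) → ∃ (t' : List C) (r : C), r ∈ S.R ∧ t = .fin (t' ++ [r]) := by
    rintro ⟨l, rfl⟩
    obtain ⟨_, hrule, _⟩ := h.exists_trRule
    obtain ⟨t', r, hr, rfl⟩ := hrule.exists_eq_append_res
    exact ⟨t', r, hr, rfl⟩
  have fin_of_ends_in_res :
      (∃ (t' : List C) (r : C), r ∈ S.R ∧ t = .fin (t' ++ [r])) → ∃ l : List C, t = .fin l := by
    rintro ⟨t', r, -, rfl⟩
    exact ⟨_, rfl⟩
  exact ⟨⟨ends_in_res_of_fin ∘ fin_of_trDerivesFin, trDerivesFin_of_fin ∘ fin_of_ends_in_res⟩,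
    ⟨fin_of_ends_in_res, ends_in_res_of_fin⟩⟩

/-- Proposition `evaltr-fin-tr`: if `⊢_{𝓡^tr} c ⇒ t`, then the
following are equivalent: (1) `⊢_{𝓡^tr} c ⇒ t` holds by a finite derivation;
(2) `t = t' · r` for some finite `t'` and result `r ∈ R`; (3) `t` is finite. -/
theorem statement0 {C : Type u} (S : BigStep C) (hBP : S.BP) (c : C) (t : Trace C)
    (h : TrDerives S c t) :
    (TrDerivesFin S c t ↔ ∃ (t' : List C) (r : C), r ∈ S.R ∧ t = Trace.fin (t' ++ [r])) ∧
    ((∃ (t' : List C) (r : C), r ∈ S.R ∧ t = Trace.fin (t' ++ [r])) ↔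
      ∃ l : List C, t = Trace.fin l) :=
  statement0_general S c t h

end BigStepMeta
end

section
/- Let (C, R, 𝓡) be a big-step semantics and 𝓡^tr its trace semantics. Then ⊢_{𝓡^tr} c ⇒ t · r holds for some finite trace t ∈ C* if and only if ⊢_𝓡 c ⇒ r holds. -/
namespace BigStepMeta

universe u

variable {C : Type u}

/-! ## Indexed predicates and soundness conditions -/

variable {I : Type u}

/-- The flattened list of finite-trace parts ends with the result of the last premise. -/
lemma zip_flatten_last {C : Type u} (P : List (Judg C)) (ts : List (List C)) (hP : P ≠ [])
    (h : ts.length = P.length) :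
    ∃ t : List C, ((P.zip ts).map finPart).flatten = t ++ [(P.getLast hP).res] := by
  have hlen : (P.zip ts).length = P.length := by simp [h]
  have hne : P.zip ts ≠ [] := by
    intro hz
    apply hP
    have := congrArg List.length hz
    simp [hlen] at this
    exact this
  have hdecomp : P.zip ts = (P.zip ts).dropLast ++ [(P.zip ts).getLast hne] :=
    (List.dropLast_append_getLast hne).symm
  have hz1 : ((P.zip ts).getLast hne).1 = P.getLast hP := by
    rw [List.getLast_eq_getElem, List.getLast_eq_getElem]
    have hlt : (P.zip ts).length - 1 < (P.zip ts).length := by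
      have : 0 < (P.zip ts).length := List.length_pos_iff.mpr hne
      omega
    rw [List.getElem_zip (h := hlt)]
    simp [hlen]
  refine ⟨(((P.zip ts).dropLast.map finPart).flatten) ++ ((P.zip ts).getLast hne).2, ?_⟩
  conv_lhs => rw [hdecomp]
  rw [List.map_append, List.flatten_append]
  simp [finPart, hz1, List.append_assoc]

/-- Key auxiliary: from membership in a backward-closed relation of `𝓡^tr` with a
finite trace, extract inductive derivability, by strong induction on trace length. -/
lemma trderives_fin_aux {C : Type u} (S : BigStep C) (X : C → Trace C → Prop)
    (hX : ∀ c' t', X c' t' → ∃ prems, TrRule S c' t' prems ∧ ∀ p ∈ prems, X p.1 p.2) :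
    ∀ (n : ℕ) (c : C) (L : List C), L.length ≤ n → X c (.fin L) →
      ∀ (t : List C) (r : C), L = t ++ [r] → Derives S c r := by
  intro n
  induction n with
  | zero =>
    intro c L hL _ t r hLr
    subst hLr
    simp at hL
  | succ n ih =>
    intro c L hL hXc t r hLr
    obtain ⟨prems, hrule, hprems⟩ := hX c (.fin L) hXc
    cases hrule with
    | ax hr =>
      -- L = [c], c ∈ R
      have : r = c := by
        have h1 : ([c] : List C).getLast? = (t ++ [r]).getLast? := by
          rw [← hLr]
        rw [List.getLast?_concat] at h1
        simp at h1
        exact h1.symm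
      subst this
      exact Derives.ax hr
    | intro hρ hts =>
      rename_i ρ ts
      -- L = ρ.concl :: flattened parts
      have hall : ∀ j ∈ ρ.premises, Derives S j.conf j.res := by
        intro j hj
        obtain ⟨k, hk, hjk⟩ := List.mem_iff_getElem.mp hj
        have hkz : k < (ρ.premises.zip ts).length := by simp [hts]; omega
        have hzk : (ρ.premises.zip ts)[k] = (j, ts[k]'(by omega)) := by
          rw [List.getElem_zip]; simp [hjk]
        have hmem : ((ρ.premises.zip ts)[k].1.conf, Trace.fin (finPart (ρ.premises.zip ts)[k]))
            ∈ (ρ.premises.zip ts).map (fun p => (p.1.conf, Trace.fin (finPart p))) := by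
          apply List.mem_map.mpr
          exact ⟨(ρ.premises.zip ts)[k], List.getElem_mem hkz, rfl⟩
        have hXj := hprems _ hmem
        rw [hzk] at hXj
        simp only at hXj
        -- length bound
        have hsub : finPart (j, ts[k]'(by omega)) ∈
            (ρ.premises.zip ts).map finPart := by
          apply List.mem_map.mpr
          exact ⟨(ρ.premises.zip ts)[k], List.getElem_mem hkz, by rw [hzk]⟩
        have hlb : (finPart (j, ts[k]'(by omega))).length ≤
            (((ρ.premises.zip ts).map finPart).flatten).length :=
          (List.sublist_flatten_of_mem hsub).length_le
        have hLlen : (ρ.concl :: ((ρ.premises.zip ts).map finPart).flatten).length =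
            (((ρ.premises.zip ts).map finPart).flatten).length + 1 := by
          simp
        have hL' := hL
        rw [hLlen] at hL'
        have hle : (finPart (j, ts[k]'(by omega))).length ≤ n := by omega
        exact ih j.conf _ hle hXj (ts[k]'(by omega)) j.res (by simp [finPart])
      have hr : r = ρ.lastJ.res := by
        obtain ⟨t', ht'⟩ := zip_flatten_last ρ.premises ts ρ.ne hts
        have h1 : (ρ.concl :: ((ρ.premises.zip ts).map finPart).flatten).getLast? = some r := by
          rw [hLr, List.getLast?_concat]
        have h2 : (ρ.concl :: ((ρ.premises.zip ts).map finPart).flatten).getLast?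
            = some ρ.lastJ.res := by
          have : ρ.concl :: ((ρ.premises.zip ts).map finPart).flatten
              = (ρ.concl :: t') ++ [ρ.lastJ.res] := by
            simp only [Rule.lastJ, List.cons_append, ht']
          rw [this, List.getLast?_concat]
        rw [h1] at h2
        exact Option.some_inj.mp h2
      subst hr
      exact Derives.rule hρ hall

/-- A finite derivation in `𝓡^tr` yields membership in its coinductive interpretation. -/
lemma trDerivesFin_trDerives {C : Type u} (S : BigStep C) {c : C} {t : Trace C}
    (h : TrDerivesFin S c t) : TrDerives S c t := by
  refine ⟨TrDerivesFin S, ?_, h⟩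
  intro c' t' h'
  cases h' with
  | step hr hp => exact ⟨_, hr, hp⟩

/-- Inductive derivability yields a finite trace derivation. -/
lemma derives_trDerivesFin {C : Type u} (S : BigStep C) {c r : C} (h : Derives S c r) :
    ∃ t : List C, TrDerivesFin S c (Trace.fin (t ++ [r])) := by
  induction h with
  | ax hr =>
    exact ⟨[], TrDerivesFin.step (TrRule.ax hr) (by simp)⟩
  | rule hρ hprem ih =>
    rename_i ρ
    classical
    set ts : List (List C) := ρ.premises.attach.map
      (fun j => (ih j.1 j.2).choose) with hts_def
    have hlen : ts.length = ρ.premises.length := by simp [hts_def]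
    have hts : ∀ (k : ℕ) (hk : k < ρ.premises.length),
        TrDerivesFin S (ρ.premises[k].conf)
          (Trace.fin ((ts[k]'(by omega)) ++ [ρ.premises[k].res])) := by
      intro k hk
      have hk' : k < ρ.premises.attach.length := by simp [hk]
      have : ts[k]'(by omega) = (ih ρ.premises[k] (List.getElem_mem hk)).choose := by
        simp only [hts_def, List.getElem_map, List.getElem_attach]
      rw [this]
      exact (ih ρ.premises[k] (List.getElem_mem hk)).choose_spec
    have hstep : TrDerivesFin S ρ.concl
        (.fin (ρ.concl :: ((ρ.premises.zip ts).map finPart).flatten)) := by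
      refine TrDerivesFin.step (TrRule.intro hρ hlen) ?_
      intro p hp
      obtain ⟨q, hq, hpq⟩ := List.mem_map.mp hp
      obtain ⟨k, hkz, hqk⟩ := List.mem_iff_getElem.mp hq
      have hk : k < ρ.premises.length := by
        simp [hlen] at hkz; omega
      have hzk : q = (ρ.premises[k], ts[k]'(by omega)) := by
        rw [← hqk, List.getElem_zip]
      subst hpq
      rw [hzk]
      simpa [finPart] using hts k hk
    obtain ⟨t', ht'⟩ := zip_flatten_last ρ.premises ts ρ.ne hlen
    refine ⟨ρ.concl :: t', ?_⟩
    have : (ρ.concl :: t') ++ [ρ.lastJ.res] =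
        ρ.concl :: ((ρ.premises.zip ts).map finPart).flatten := by
      simp only [Rule.lastJ]
      rw [ht']
      simp
    rw [this]
    exact hstep

/-- Theorem `eq-finite_0`, conservativity of the trace construction:
`⊢_{𝓡^tr} c ⇒ t · r` for some finite trace `t` iff `⊢_𝓡 c ⇒ r`. -/
theorem statement1 {C : Type u} (S : BigStep C) (hBP : S.BP) (c r : C) :
    (∃ t : List C, TrDerives S c (Trace.fin (t ++ [r]))) ↔ Derives S c r := by
  constructor
  · rintro ⟨t, X, hX, hXc⟩
    exact trderives_fin_aux S X hX (t ++ [r]).length c (t ++ [r]) le_rfl hXc t r rfl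
  · intro h
    obtain ⟨t, ht⟩ := derives_trDerivesFin S h
    exact ⟨t, trDerivesFin_trDerives S ht⟩

end BigStepMeta
end

section
/- Let (C, R, 𝓡) be a big-step semantics and 𝓡^wr its wrong semantics. Then for every configuration c and result r ∈ R, ⊢_{𝓡^wr} c ⇒ r holds if and only if ⊢_𝓡 c ⇒ r holds. -/
namespace BigStepMeta

universe u

variable {C : Type u}

/-! ## Indexed predicates and soundness conditions -/

variable {I : Type u}

/-- Theorem `eq-finite_1`, conservativity of the wrong construction:
for every configuration `c` and result `r ∈ R`, `⊢_{𝓡^wr} c ⇒ r` iff `⊢_𝓡 c ⇒ r`. -/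
theorem statement2 {C : Type u} (S : BigStep C) (c r : C) (hr : r ∈ S.R) :
    DerivesW S c (some r) ↔ Derives S c r := by
  constructor
  · intro h
    have key : ∀ (c' : C) (u : Option C), DerivesW S c' u → ∀ r', u = some r' →
        Derives S c' r' := by
      intro c' u h
      induction h with
      | ax hr => intro r' hr'; cases hr'; exact Derives.ax ‹_›
      | rule hρ hprem ih =>
        intro r' hr'; cases hr'
        exact Derives.rule hρ (fun j hj => ih j hj j.res rfl)
      | wrong_intro _ _ _ _ _ _ _ _ => intro r' hr'; cases hr'
      | wrong_ax _ _ => intro r' hr'; cases hr'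
      | wrong_prop _ _ _ _ _ _ => intro r' hr'; cases hr'
    exact key c _ h r rfl
  · intro h
    clear hr
    induction h with
    | ax hr => exact DerivesW.ax ‹_›
    | rule hρ hprem ih => exact DerivesW.rule hρ (fun j hj => ih j hj)

end BigStepMeta
end

section
/- Let (C, R, 𝓡) be a big-step semantics and Π = (Π_ι)_{ι∈I} an indexed predicate on configurations satisfying condition S1 (local preservation). If ⊢_𝓡 c ⇒ r and c ∈ Π_ι, then r ∈ Π_ι. -/
namespace BigStepMeta

universe u

variable {C : Type u}

/-! ## Indexed predicates and soundness conditions -/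

variable {I : Type u}

theorem Rule.lastJ_eq_getElem (ρ : Rule C) :
    ρ.lastJ = ρ.premises[ρ.premises.length - 1]'
      (Nat.sub_one_lt (List.length_pos_iff.mpr ρ.ne).ne') :=
  List.getLast_eq_getElem ρ.ne

theorem getElem_res_mem_of_chain {P : I → Set C} {f : ℕ → I} {l : List (Judg C)}
    (hconf : ∀ (k : ℕ) (hk : k < l.length),
      (∀ (h : ℕ) (hh : h < k), (l[h]'(hh.trans hk)).res ∈ P (f h)) → l[k].conf ∈ P (f k))
    (hpres : ∀ j ∈ l, ∀ i, j.conf ∈ P i → j.res ∈ P i) :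
    ∀ (k : ℕ) (hk : k < l.length), l[k].res ∈ P (f k) := by
  intro k
  induction k using Nat.strong_induction_on with
  | _ k ih =>
    intro hk
    exact hpres _ (List.getElem_mem hk) _ (hconf k hk fun h hh => ih h hh _)

/-- Lemma: preservation: if local preservation (S1) holds,
`⊢_𝓡 c ⇒ r` and `c ∈ Π_ι`, then `r ∈ Π_ι`. -/
theorem statement3 {C : Type u} {I : Type u} (S : BigStep C) (P : I → Set C)
    (hS1 : LocalPres S P) {c r : C} {i : I}
    (h : Derives S c r) (hc : c ∈ P i) : r ∈ P i := by
  induction h generalizing i with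
  | ax _ => exact hc
  | @rule ρ hρ _ ih =>
    obtain ⟨f, hf_last, hconf⟩ := hS1 ρ hρ i hc
    have hres := getElem_res_mem_of_chain hconf fun j hj _ => ih j hj
    rw [Rule.lastJ_eq_getElem, ← hf_last]
    exact hres _ _

end BigStepMeta
end

section
/- Let (C, R, 𝓡) be a big-step semantics and Π = (Π_ι)_{ι∈I} an indexed predicate on configurations satisfying condition S1 (local preservation). Then for each rule with premises j₁,…,j_{n+1} and conclusion configuration c, and each k ∈ 1..n+1: if c ∈ Π and ⊢_𝓡 j_h holds for all h < k, then C(j_k) ∈ Π. -/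
/-! Each derivable judgment `c ⇒ r` maps every `Π_ι` into itself: by induction on the derivation,
the indices that S1 supplies for a rule are threaded along its premises, and the last one is `ι`.
Running the same threading only up to premise `k` of the given rule, where the earlier premises
are derivable and hence preserve their indices, puts `C(j_k)` in `Π`. -/

namespace BigStepMeta

universe u

variable {C : Type u}

/-! ## Indexed predicates and soundness conditions -/

variable {I : Type u}

section Preservation

variable {S : BigStep C} {P : I → Set C}

theorem premise_conf_mem_of_take {l : List (Judg C)} {f : ℕ → I}
    (hstep : ∀ (k : ℕ) (hk : k < l.length),
      (∀ (h : ℕ) (hh : h < k), (l.get ⟨h, hh.trans hk⟩).res ∈ P (f h)) →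
        (l.get ⟨k, hk⟩).conf ∈ P (f k))
    {k : ℕ} (hpres : ∀ j ∈ l.take k, ∀ i, j.conf ∈ P i → j.res ∈ P i) (hk : k < l.length) :
    l[k].conf ∈ P (f k) := by
  induction k using Nat.strong_induction_on with
  | _ k ih =>
    refine hstep k hk fun h hhk => hpres _ ?_ _ ?_
    · exact List.mem_iff_getElem.mpr ⟨h, by simp [hhk, hhk.trans hk], by simp⟩
    · exact ih h hhk (fun j hj => hpres j (List.take_subset_take_left l hhk.le hj)) _

theorem Derives.mem_of_localPres (hS1 : LocalPres S P) {c r : C} (hder : Derives S c r)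
    {i : I} (hc : c ∈ P i) : r ∈ P i := by
  induction hder generalizing i with
  | ax _ => exact hc
  | @rule ρ hρ _ ih =>
    obtain ⟨f, hf, hstep⟩ := hS1 ρ hρ i hc
    have hlast : ρ.premises.length - 1 < ρ.premises.length :=
      Nat.sub_one_lt (List.length_pos_iff.mpr ρ.ne).ne'
    have hconf := premise_conf_mem_of_take hstep
      (fun j hj _ hj' => ih j (List.mem_of_mem_take hj) hj') hlast
    rw [Rule.lastJ, List.getLast_eq_getElem, ← hf]
    exact ih _ (List.getElem_mem hlast) hconf

end Preservation

/-- Proposition `preservation`: assuming S1, for each rule with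
premises `pre ++ j :: rest` and conclusion configuration in `Π`, if all premises in
`pre` are derivable, then the configuration of `j` satisfies `Π`. -/
theorem statement4 {C : Type u} {I : Type u} (S : BigStep C) (P : I → Set C)
    (hS1 : LocalPres S P) (ρ : Rule C) (hρ : ρ ∈ S.Rules)
    (pre : List (Judg C)) (j : Judg C) (rest : List (Judg C))
    (hdec : ρ.premises = pre ++ j :: rest)
    (hc : InPred P ρ.concl)
    (hder : ∀ j' ∈ pre, Derives S j'.conf j'.res) :
    InPred P j.conf := by
  obtain ⟨i, hc⟩ := hc
  obtain ⟨f, -, hstep⟩ := hS1 ρ hρ i hc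
  have hlen : pre.length < ρ.premises.length := by simp [hdec]
  have htake : ρ.premises.take pre.length = pre := by simp [hdec]
  have hj : ρ.premises[pre.length] = j := by simp [hdec]
  refine ⟨f pre.length, hj ▸ premise_conf_mem_of_take hstep ?_ hlen⟩
  rw [htake]
  exact fun j' hj' _ => (hder j' hj').mem_of_localPres hS1

end BigStepMeta
end

section
/- Let (C, R, 𝓡) be a big-step semantics (satisfying the boundedness condition BP) and Π = (Π_ι)_{ι∈I} an indexed predicate on configurations. If 𝓡 and Π satisfy conditions S2 (∃-progress) and S3 (∀-progress), then they satisfy condition S4 (progress-may). -/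
namespace BigStepMeta

universe u

variable {C : Type u}

/-! ## Indexed predicates and soundness conditions -/

variable {I : Type u}

lemma derives_res_mem {C : Type u} {S : BigStep C} {c r : C} (h : Derives S c r) : r ∈ S.R := by
  induction h with
  | ax hr => exact hr
  | rule hρ hprem _ =>
    exact S.prem_res _ hρ _ (List.getLast_mem _)

/-- Proposition `progress-to-may`: under condition BP, conditions
S2 (∃-progress) and S3 (∀-progress) imply condition S4 (progress-may). -/
theorem statement6 {C : Type u} {I : Type u} (S : BigStep C) (hBP : S.BP)
    (P : I → Set C) (hS2 : ExProgress S P) (hS3 : AllProgress S P) :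
    ProgressMay S P := by
  classical
  obtain ⟨b, hb⟩ := hBP
  intro c hc hcR
  -- Q m : some rule with conclusion c has its first m premises derivable
  set Q : ℕ → Prop := fun m => ∃ ρ ∈ S.Rules, ρ.concl = c ∧ m ≤ ρ.premises.length ∧
    ∀ j' ∈ ρ.premises.take m, Derives S j'.conf j'.res with hQdef
  obtain ⟨ρ₀, hρ₀, hρ₀c⟩ := hS2 c hc hcR
  have hQ0 : Q 0 := ⟨ρ₀, hρ₀, hρ₀c, Nat.zero_le _, by simp⟩
  set k := Nat.findGreatest Q b with hk
  have hQk : Q k := Nat.findGreatest_spec (Nat.zero_le b) hQ0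
  obtain ⟨ρ, hρ, hρc, hklen, hder⟩ := hQk
  refine ⟨ρ, hρ, hρc, ?_⟩
  intro pre j rest hsplit hpre hjnot
  rintro ⟨r, hr⟩
  have hrR : r ∈ S.R := derives_res_mem hr
  have hcont : HasContinuation S ρ.concl pre j.conf r :=
    hS3 ρ hρ (hρc ▸ hc) pre j rest hsplit hpre r hrR hr
  obtain ⟨ρ', hρ', j', rest', hsplit', hconcl', hjc', hjr'⟩ := hcont
  -- Q (pre.length + 1) holds via ρ'
  have hQnext : Q (pre.length + 1) := by
    refine ⟨ρ', hρ', by rw [hconcl', hρc], ?_, ?_⟩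
    · rw [hsplit']; simp
    · intro j'' hj''
      rw [hsplit'] at hj''
      rw [List.take_append,
        List.take_of_length_le (by omega : pre.length ≤ pre.length + 1)] at hj''
      simp at hj''
      rcases hj'' with h | h
      · exact hpre _ h
      · subst h; rw [hjc', hjr']; exact hr
  have hle : pre.length + 1 ≤ k := by
    by_contra hlt
    push_neg at hlt
    have hbnd : pre.length + 1 ≤ b := by
      have := hb ρ' hρ'
      rw [hsplit'] at this
      simp at this
      omega
    exact Nat.findGreatest_is_greatest hlt hbnd hQnext
  -- then j itself is among the first k premises of ρ, hence derivable: contradiction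
  have hjmem : j ∈ ρ.premises.take k := by
    rw [hsplit, List.take_append]
    have h1 : pre.take k = pre := List.take_of_length_le (by omega)
    rw [h1]
    have h2 : 1 ≤ k - pre.length := by omega
    rcases Nat.exists_eq_add_of_le h2 with ⟨m, hm⟩
    rw [hm]
    simp [List.take_cons]
  exact hjnot (hder j hjmem)

end BigStepMeta
end

section
/- Let (C, R, 𝓡) be a big-step semantics, 𝓡^tr its trace semantics, and S ⊆ C a set of configurations. Suppose that for every c ∈ S there are a rule with premises j₁,…,j_{n+1} and conclusion configuration c, and an index k ∈ 1..n+1, such that (1) ⊢_𝓡 j_h for all h < k, and (2) C(j_k) ∈ S. Then for every c ∈ S there is an infinite trace t ∈ C^ω such that ⊢_{𝓡^tr} c ⇒ t. -/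
namespace BigStepMeta

universe u

variable {C : Type u}

/-! ## Indexed predicates and soundness conditions -/

variable {I : Type u}

section Statement7Aux

variable {C : Type u}

/-- Every inductively derivable judgment has a finite trace derivation ending in its result. -/
lemma derivesTrace (S : BigStep C) {c r : C} (hd : Derives S c r) :
    ∃ l : List C, TrDerivesFin S c (.fin (l ++ [r])) := by
  induction hd with
  | ax hr => exact ⟨[], .step (.ax hr) (by simp)⟩
  | @rule ρ hρ hprem ih =>
    classical
    set ts : List (List C) :=
      ρ.premises.attach.map (fun j => (ih j.1 j.2).choose) with hts
    have hlen : ts.length = ρ.premises.length := by simp [hts]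
    have hne : ρ.premises ≠ [] := ρ.ne
    set zp := ρ.premises.zip ts with hzpdef
    have hzplen : zp.length = ρ.premises.length := by
      simp [hzpdef, hlen]
    have hzpget : ∀ (i : ℕ) (hi : i < zp.length),
        zp[i] = (ρ.premises[i]'(by omega),
          (ih (ρ.premises[i]'(by omega)) (by exact List.getElem_mem _)).choose) := by
      intro i hi
      have hi1 : i < ρ.premises.length := by omega
      have hi2 : i < ts.length := by omega
      have : zp[i] = (ρ.premises[i], ts[i]) := List.getElem_zip ..
      rw [this]
      congr 1
      simp [hts]
    have hch : ∀ p ∈ zp.map (fun p => (p.1.conf, Trace.fin (finPart p))),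
        TrDerivesFin S p.1 p.2 := by
      intro p hp
      obtain ⟨q, hq, rfl⟩ := List.mem_map.1 hp
      obtain ⟨i, hi, rfl⟩ := List.mem_iff_getElem.1 hq
      rw [hzpget i hi]
      have := (ih (ρ.premises[i]'(by omega)) (List.getElem_mem _)).choose_spec
      simpa [finPart] using this
    have hstep : TrDerivesFin S ρ.concl
        (.fin (ρ.concl :: (zp.map finPart).flatten)) :=
      .step (TrRule.intro hρ hlen) hch
    -- now rewrite the trace into the form `l ++ [ρ.lastJ.res]`
    have hzpne : zp ≠ [] := by
      intro hz
      apply hne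
      have := hzplen
      rw [hz] at this
      simpa using (List.length_eq_zero_iff.mp this.symm)
    have hsplit := List.dropLast_append_getLast hzpne
    have hflat : (zp.map finPart).flatten
        = ((zp.dropLast.map finPart).flatten) ++ finPart (zp.getLast hzpne) := by
      conv_lhs => rw [← hsplit]
      simp
    have hlast1 : (zp.getLast hzpne).1 = ρ.premises.getLast hne := by
      rw [List.getLast_eq_getElem, List.getLast_eq_getElem]
      have hi : zp.length - 1 < zp.length := by
        have := List.length_pos_iff.2 hzpne; omega
      rw [hzpget _ hi]
      simp [hzplen]
    refine ⟨ρ.concl :: ((zp.dropLast.map finPart).flatten ++ (zp.getLast hzpne).2), ?_⟩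
    have : (Trace.fin (ρ.concl :: (zp.map finPart).flatten))
        = .fin ((ρ.concl :: ((zp.dropLast.map finPart).flatten ++ (zp.getLast hzpne).2))
            ++ [ρ.lastJ.res]) := by
      rw [hflat]
      simp [finPart, hlast1, Rule.lastJ]
    rwa [this] at hstep

variable (S : BigStep C) (Spec : Set C)
variable (h : ∀ c ∈ Spec, ∃ ρ ∈ S.Rules, ρ.concl = c ∧
      ∃ (pre : List (Judg C)) (j : Judg C) (rest : List (Judg C)),
        ρ.premises = pre ++ j :: rest ∧
        (∀ j' ∈ pre, Derives S j'.conf j'.res) ∧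
        j.conf ∈ Spec)

include h in
lemma statement7Ex (c : {x // x ∈ Spec}) :
    ∃ (hd : List C) (c' : {x // x ∈ Spec}), 1 ≤ hd.length ∧
      ∀ f : ℕ → C, ∃ prems : List (C × Trace C),
        TrRule S c.1 (.inf (appendInf hd f)) prems ∧
        ∀ p ∈ prems, TrDerivesFin S p.1 p.2 ∨ (p.1 = c'.1 ∧ p.2 = Trace.inf f) := by
  classical
  obtain ⟨ρ, hρ, hconcl, pre, j, rest, hsplit, hpre, hj⟩ := h c.1 c.2
  set ts : List (List C) :=
    pre.attach.map (fun j' => (derivesTrace S (hpre j'.1 j'.2)).choose) with hts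
  have hlen : ts.length = pre.length := by simp [hts]
  refine ⟨ρ.concl :: ((pre.zip ts).map finPart).flatten, ⟨j.conf, hj⟩, by simp, ?_⟩
  intro f
  refine ⟨((pre.zip ts).map (fun p => (p.1.conf, Trace.fin (finPart p)))) ++
      [(j.conf, Trace.inf f)], ?_, ?_⟩
  · rw [← hconcl]
    exact TrRule.div hρ hsplit hlen
  · intro p hp
    rcases List.mem_append.1 hp with hp | hp
    · left
      obtain ⟨q, hq, rfl⟩ := List.mem_map.1 hp
      obtain ⟨i, hi, rfl⟩ := List.mem_iff_getElem.1 hq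
      have hi1 : i < pre.length := by
        simpa [hlen] using hi
      have hget : (pre.zip ts)[i] = (pre[i],
          (derivesTrace S (hpre pre[i] (List.getElem_mem _))).choose) := by
        have : (pre.zip ts)[i] = (pre[i]'(by omega), ts[i]'(by omega)) := List.getElem_zip ..
        rw [this]
        congr 1
        simp [hts]
      rw [hget]
      have := (derivesTrace S (hpre pre[i] (List.getElem_mem _))).choose_spec
      simpa [finPart] using this
    · right
      simp only [List.mem_singleton] at hp
      subst hp
      exact ⟨rfl, rfl⟩

noncomputable def s7hd (c : {x // x ∈ Spec}) : List C :=
  (statement7Ex S Spec h c).choose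

noncomputable def s7nxt (c : {x // x ∈ Spec}) : {x // x ∈ Spec} :=
  (statement7Ex S Spec h c).choose_spec.choose

include h in
lemma s7spec (c : {x // x ∈ Spec}) :
    1 ≤ (s7hd S Spec h c).length ∧
      ∀ f : ℕ → C, ∃ prems : List (C × Trace C),
        TrRule S c.1 (.inf (appendInf (s7hd S Spec h c) f)) prems ∧
        ∀ p ∈ prems, TrDerivesFin S p.1 p.2 ∨
          (p.1 = (s7nxt S Spec h c).1 ∧ p.2 = Trace.inf f) := by
  unfold s7hd s7nxt
  exact (statement7Ex S Spec h c).choose_spec.choose_spec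

noncomputable def s7g (c : {x // x ∈ Spec}) (n : ℕ) : C :=
  if hn : n < (s7hd S Spec h c).length then (s7hd S Spec h c)[n]
  else s7g (s7nxt S Spec h c) (n - (s7hd S Spec h c).length)
termination_by n
decreasing_by
  have := (s7spec S Spec h c).1
  omega

include h in
lemma s7g_eq (c : {x // x ∈ Spec}) :
    s7g S Spec h c = appendInf (s7hd S Spec h c) (s7g S Spec h (s7nxt S Spec h c)) := by
  funext n
  rw [s7g, appendInf]
  simp [List.get_eq_getElem]

end Statement7Aux

/-- Lemma `div-consistency`: if every `c ∈ S` is the conclusion of a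
rule whose premises before some index `k` are derivable and whose `k`-th premise
configuration is in `S`, then every `c ∈ S` has an infinite trace in `𝓡^tr`. -/
theorem statement7 {C : Type u} (S : BigStep C) (Spec : Set C)
    (h : ∀ c ∈ Spec, ∃ ρ ∈ S.Rules, ρ.concl = c ∧
      ∃ (pre : List (Judg C)) (j : Judg C) (rest : List (Judg C)),
        ρ.premises = pre ++ j :: rest ∧
        (∀ j' ∈ pre, Derives S j'.conf j'.res) ∧
        j.conf ∈ Spec) :
    ∀ c ∈ Spec, ∃ f : ℕ → C, TrDerives S c (Trace.inf f) := by
  intro c hc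
  refine ⟨s7g S Spec h ⟨c, hc⟩, ?_⟩
  refine ⟨fun a t => TrDerivesFin S a t ∨
      ∃ c' : {x // x ∈ Spec}, a = c'.1 ∧ t = .inf (s7g S Spec h c'), ?_, ?_⟩
  · rintro a t (hfin | ⟨c', rfl, rfl⟩)
    · cases hfin with
      | @step _ _ prems hr hch =>
        exact ⟨prems, hr, fun p hp => Or.inl (hch p hp)⟩
    · obtain ⟨prems, hr, hch⟩ := (s7spec S Spec h c').2 (s7g S Spec h (s7nxt S Spec h c'))
      rw [← s7g_eq S Spec h c'] at hr
      refine ⟨prems, hr, fun p hp => ?_⟩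
      rcases hch p hp with hp' | ⟨h1, h2⟩
      · exact Or.inl hp'
      · exact Or.inr ⟨s7nxt S Spec h c', h1, h2⟩
  · exact Or.inr ⟨⟨c, hc⟩, rfl, rfl⟩

end BigStepMeta
end

section
/- Let (C, R, 𝓡) be a big-step semantics and Π = (Π_ι)_{ι∈I} an indexed predicate on configurations satisfying conditions S1 (local preservation) and S4 (progress-may). If c ∈ Π, then there is a (finite or infinite) trace t such that ⊢_{𝓡^tr} c ⇒ t in the trace semantics 𝓡^tr. -/
namespace BigStepMeta

universe u

variable {C : Type u}

/-! ## Indexed predicates and soundness conditions -/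

variable {I : Type u}

/-! If `c` has a derivable result, its finite derivation is already a trace derivation.
Otherwise S4 provides a rule for `c` whose first non-derivable premise `j` has no derivable
result at all, and S1 (with the preservation of `Π` along derivations that S1 implies)
puts `C(j)` in `Π`. So every configuration of `Π` without result steps, by a
divergence-propagation rule, to another such configuration; iterating these steps yields
an infinite trace, and the set of all these steps is a consistent set of judgments of
`𝓡^tr`. -/

theorem List.exists_eq_append_cons_of_not_forall {α : Type*} {p : α → Prop} :
    ∀ {l : List α}, ¬ (∀ a ∈ l, p a) →
      ∃ pre a rest, l = pre ++ a :: rest ∧ (∀ b ∈ pre, p b) ∧ ¬ p a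
  | [], h => absurd (fun _ h => nomatch h) h
  | a :: l, h => by
    by_cases ha : p a
    · obtain ⟨pre, b, rest, rfl, hpre, hb⟩ :=
        List.exists_eq_append_cons_of_not_forall (l := l) (by simpa [ha] using h)
      exact ⟨a :: pre, b, rest, rfl, by simpa [ha] using hpre, hb⟩
    · exact ⟨[], a, l, rfl, by simp, ha⟩

theorem premise_conf_mem_of_le {P : I → Set C} {ps : List (Judg C)} {f : ℕ → I} {n : ℕ}
    (hstep : ∀ (k : ℕ) (hk : k < ps.length),
      (∀ (h : ℕ) (hh : h < k), (ps.get ⟨h, hh.trans hk⟩).res ∈ P (f h)) →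
        (ps.get ⟨k, hk⟩).conf ∈ P (f k))
    (hpres : ∀ (k : ℕ) (hk : k < ps.length), k < n →
      (ps.get ⟨k, hk⟩).conf ∈ P (f k) → (ps.get ⟨k, hk⟩).res ∈ P (f k)) :
    ∀ (k : ℕ) (hk : k < ps.length), k ≤ n → (ps.get ⟨k, hk⟩).conf ∈ P (f k) := by
  intro k
  induction k using Nat.strong_induction_on with
  | _ k ih =>
    intro hk hkn
    refine hstep k hk fun h hh => hpres h _ (hh.trans_le hkn) ?_
    exact ih h hh _ (hh.trans_le hkn).le

theorem LocalPres.mem_of_derives {S : BigStep C} {P : I → Set C} (hS1 : LocalPres S P)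
    {c r : C} (h : Derives S c r) {i : I} (hc : c ∈ P i) : r ∈ P i := by
  induction h generalizing i with
  | ax => exact hc
  | @rule ρ hρ _ ih =>
    obtain ⟨f, hf, hstep⟩ := hS1 ρ hρ i hc
    have hpres : ∀ (k : ℕ) (hk : k < ρ.premises.length), k < ρ.premises.length →
        (ρ.premises.get ⟨k, hk⟩).conf ∈ P (f k) → (ρ.premises.get ⟨k, hk⟩).res ∈ P (f k) :=
      fun k hk _ => ih _ (List.get_mem _ _)
    have hlast : ρ.premises.length - 1 < ρ.premises.length := by
      have := List.length_pos_iff.mpr ρ.ne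
      omega
    have hres := hpres _ hlast hlast (premise_conf_mem_of_le hstep hpres _ hlast hlast.le)
    rw [hf] at hres
    simpa [Rule.lastJ, List.getLast_eq_getElem] using hres

theorem LocalPres.inPred_conf {S : BigStep C} {P : I → Set C} (hS1 : LocalPres S P)
    {ρ : Rule C} (hρ : ρ ∈ S.Rules) (hc : InPred P ρ.concl)
    {pre rest : List (Judg C)} {j : Judg C} (hsplit : ρ.premises = pre ++ j :: rest)
    (hpre : ∀ j' ∈ pre, Derives S j'.conf j'.res) : InPred P j.conf := by
  obtain ⟨i, hi⟩ := hc
  obtain ⟨f, -, hstep⟩ := hS1 ρ hρ i hi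
  have hlen : pre.length < ρ.premises.length := by simp [hsplit]
  have hpres : ∀ (k : ℕ) (hk : k < ρ.premises.length), k < pre.length →
      (ρ.premises.get ⟨k, hk⟩).conf ∈ P (f k) → (ρ.premises.get ⟨k, hk⟩).res ∈ P (f k) := by
    intro k hk hkpre
    have hget : ρ.premises.get ⟨k, hk⟩ = pre[k] := by
      simp [hsplit, List.getElem_append_left hkpre]
    rw [hget]
    exact hS1.mem_of_derives (hpre _ (List.getElem_mem hkpre))
  refine ⟨f pre.length, ?_⟩
  have hj := premise_conf_mem_of_le hstep hpres _ hlen le_rfl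
  simpa [hsplit] using hj

theorem ProgressMay.exists_stuck_premise {S : BigStep C} {P : I → Set C}
    (hS4 : ProgressMay S P) {c : C} (hc : InPred P c) (hdiv : ¬ ∃ r, Derives S c r) :
    ∃ ρ ∈ S.Rules, ρ.concl = c ∧ ∃ pre j rest, ρ.premises = pre ++ j :: rest ∧
      (∀ j' ∈ pre, Derives S j'.conf j'.res) ∧ ¬ ∃ r, Derives S j.conf r := by
  obtain ⟨ρ, hρ, rfl, hstuck⟩ := hS4 c hc fun hcR => hdiv ⟨c, .ax hcR⟩
  have hnot : ¬ ∀ j ∈ ρ.premises, Derives S j.conf j.res :=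
    fun hall => hdiv ⟨_, .rule hρ hall⟩
  obtain ⟨pre, j, rest, hsplit, hpre, hj⟩ := List.exists_eq_append_cons_of_not_forall hnot
  exact ⟨ρ, hρ, rfl, pre, j, rest, hsplit, hpre, hstuck pre j rest hsplit hpre hj⟩

theorem exists_traces_of_forall_derivesFin {S : BigStep C} :
    ∀ {pre : List (Judg C)},
      (∀ j ∈ pre, ∃ l : List C, TrDerivesFin S j.conf (.fin (l ++ [j.res]))) →
      ∃ ts : List (List C), ts.length = pre.length ∧
        ∀ p ∈ (pre.zip ts).map (fun p => (p.1.conf, Trace.fin (finPart p))),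
          TrDerivesFin S p.1 p.2
  | [], _ => ⟨[], rfl, by simp⟩
  | j :: pre, h => by
    obtain ⟨l, hl⟩ := h j List.mem_cons_self
    obtain ⟨ts, hlen, hts⟩ :=
      exists_traces_of_forall_derivesFin fun j' hj' => h j' (List.mem_cons_of_mem _ hj')
    refine ⟨l :: ts, by simp [hlen], ?_⟩
    simp only [List.zip_cons_cons, List.map_cons, List.forall_mem_cons]
    exact ⟨hl, hts⟩

theorem flatten_map_finPart_eq_append_res_s8 {ps : List (Judg C)} {ts : List (List C)}
    (hne : ps ≠ []) (hlen : ts.length = ps.length) :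
    ∃ l, ((ps.zip ts).map finPart).flatten = l ++ [(ps.getLast hne).res] := by
  have hts : ts ≠ [] := by
    rintro rfl
    exact hne (List.length_eq_zero_iff.mp hlen.symm)
  have hinit : ps.dropLast.length = ts.dropLast.length := by simp [hlen]
  refine ⟨((ps.dropLast.zip ts.dropLast).map finPart).flatten ++ ts.getLast hts, ?_⟩
  conv_lhs => rw [← List.dropLast_append_getLast hne, ← List.dropLast_append_getLast hts]
  rw [List.zip_append hinit]
  simp [finPart]

theorem Derives.exists_trDerivesFin {S : BigStep C} {c r : C} (h : Derives S c r) :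
    ∃ l : List C, TrDerivesFin S c (.fin (l ++ [r])) := by
  induction h with
  | ax hr => exact ⟨[], .step (.ax hr) (by simp)⟩
  | @rule ρ hρ _ ih =>
    obtain ⟨ts, hlen, hts⟩ := exists_traces_of_forall_derivesFin ih
    obtain ⟨l, hl⟩ := flatten_map_finPart_eq_append_res_s8 ρ.ne hlen
    refine ⟨ρ.concl :: l, ?_⟩
    have hstep := TrDerivesFin.step (TrRule.intro hρ hlen) hts
    rwa [hl] at hstep

theorem TrDerivesFin.trDerives {S : BigStep C} {c : C} {t : Trace C}
    (h : TrDerivesFin S c t) : TrDerives S c t :=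
  ⟨TrDerivesFin S, fun _ _ ⟨hrule, hprems⟩ => ⟨_, hrule, hprems⟩, h⟩

def DivStep (S : BigStep C) (c : C) (pt : List C) (c' : C) : Prop :=
  ∃ prems : List (C × Trace C), (∀ p ∈ prems, TrDerivesFin S p.1 p.2) ∧
    ∀ f : ℕ → C, TrRule S c (.inf (appendInf (c :: pt) f)) (prems ++ [(c', .inf f)])

theorem divStep_of_premises_eq {S : BigStep C} {ρ : Rule C} (hρ : ρ ∈ S.Rules)
    {pre rest : List (Judg C)} {j : Judg C} (hsplit : ρ.premises = pre ++ j :: rest)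
    (hpre : ∀ j' ∈ pre, Derives S j'.conf j'.res) :
    ∃ pt, DivStep S ρ.concl pt j.conf := by
  obtain ⟨ts, hlen, hts⟩ :=
    exists_traces_of_forall_derivesFin fun j' hj' => (hpre j' hj').exists_trDerivesFin
  exact ⟨_, _, hts, fun _ => .div hρ hsplit hlen⟩

/-- The infinite trace `head a :: tail a ++ head (next a) :: tail (next a) ++ ⋯`. -/
def corecTrace {α : Type*} (head : α → C) (tail : α → List C) (next : α → α)
    (a : α) (n : ℕ) : C :=
  if h : n < (tail a).length + 1 then (head a :: tail a).get ⟨n, h⟩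
  else corecTrace head tail next (next a) (n - ((tail a).length + 1))
termination_by n

theorem corecTrace_eq {α : Type*} (head : α → C) (tail : α → List C) (next : α → α)
    (a : α) :
    corecTrace head tail next a =
      appendInf (head a :: tail a) (corecTrace head tail next (next a)) := by
  funext n
  rw [corecTrace]
  rfl

theorem exists_trDerives_inf_of_divStep {S : BigStep C} {D : Set C}
    (hD : ∀ c ∈ D, ∃ pt, ∃ c' ∈ D, DivStep S c pt c') {c : C} (hc : c ∈ D) :
    ∃ f, TrDerives S c (.inf f) := by
  choose pt next hnext hstep using hD
  let tr := corecTrace (fun a : D => a.1) (fun a => pt a.1 a.2)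
    (fun a => ⟨next a.1 a.2, hnext a.1 a.2⟩)
  refine ⟨tr ⟨c, hc⟩,
    fun c' t' => TrDerivesFin S c' t' ∨ ∃ a : D, c' = a ∧ t' = .inf (tr a), ?_,
    .inr ⟨⟨c, hc⟩, rfl, rfl⟩⟩
  rintro c' t' (⟨hrule, hprems⟩ | ⟨a, rfl, rfl⟩)
  · exact ⟨_, hrule, fun p hp => .inl (hprems p hp)⟩
  · obtain ⟨prems, hprems, hrule⟩ := hstep a.1 a.2
    refine ⟨prems ++ [(next a.1 a.2, .inf (tr ⟨_, hnext a.1 a.2⟩))], ?_, ?_⟩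
    · rw [show tr a = _ from corecTrace_eq ..]
      exact hrule _
    simp only [List.mem_append, List.mem_singleton]
    rintro p (hp | rfl)
    · exact .inl (hprems p hp)
    · exact .inr ⟨_, rfl, rfl⟩

/-- Theorem `sound-traces`, soundness-may w.r.t. the trace semantics:
if S1 and S4 hold and `c ∈ Π`, then there is a (finite or infinite) trace `t` with
`⊢_{𝓡^tr} c ⇒ t`. -/
theorem statement8 {C : Type u} {I : Type u} (S : BigStep C) (P : I → Set C)
    (hS1 : LocalPres S P) (hS4 : ProgressMay S P)
    (c : C) (hc : InPred P c) :
    ∃ t : Trace C, TrDerives S c t := by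
  by_cases hconv : ∃ r, Derives S c r
  · obtain ⟨r, hr⟩ := hconv
    obtain ⟨l, hl⟩ := hr.exists_trDerivesFin
    exact ⟨_, hl.trDerives⟩
  · let D : Set C := {c | InPred P c ∧ ¬ ∃ r, Derives S c r}
    have hD : ∀ c ∈ D, ∃ pt, ∃ c' ∈ D, DivStep S c pt c' := by
      rintro _ ⟨hc, hdiv⟩
      obtain ⟨ρ, hρ, rfl, pre, j, rest, hsplit, hpre, hj⟩ := hS4.exists_stuck_premise hc hdiv
      obtain ⟨pt, hpt⟩ := divStep_of_premises_eq hρ hsplit hpre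
      exact ⟨pt, j.conf, ⟨hS1.inPred_conf hρ hc hsplit hpre, hj⟩, hpt⟩
    obtain ⟨f, hf⟩ := exists_trDerives_inf_of_divStep hD ⟨hc, hconv⟩
    exact ⟨_, hf⟩

end BigStepMeta
end

section
/- Let τ be a (possibly infinite) proof tree in the partial-evaluation semantics 𝓡^? of a big-step semantics (C, R, 𝓡). Then: (1) for all αn ∈ dom(τ), if the result part of τ(αn) is ?, then the result part of τ(α) is ?; (2) for each n ∈ ℕ, there is at most one α ∈ dom(τ) with |α| = n such that the result part of τ(α) is ?. -/
namespace BigStepMeta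

universe u

variable {C : Type u}

/-! ## Indexed predicates and soundness conditions -/

variable {I : Type u}

/-! In a rule of `𝓡^?` only the last premise can have result `?`, and then so does the
conclusion. Hence the `?`-labelled nodes of a proof tree form a single branch from the root. -/

lemma List.eq_length_of_getElem?_append_singleton {A : Type*} {l : List A} {a b : A} {i : ℕ}
    (hb : b ∉ l) (h : (l ++ [a])[i]? = some b) : i = l.length := by
  obtain ⟨hi, rfl⟩ := List.getElem?_eq_some_iff.mp h
  rcases Nat.lt_or_ge i l.length with hlt | hge
  · exact absurd (by simp [List.getElem_append_left hlt]) hb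
  · simp only [List.length_append, List.length_singleton] at hi
    omega

namespace URule

variable {S : BigStep C} {c : C} {u : Option C} {prems : List (C × Option C)}

lemma eq_none_of_mem {c' : C} (h : URule S c u prems) (hm : (c', none) ∈ prems) : u = none := by
  cases h with
  | ax _ | unk_ax | rule _ => simp at hm
  | unk _ _ _ | prop _ _ => rfl

lemma index_eq_of_getElem?_eq_none {c₁ c₂ : C} {i j : ℕ} (h : URule S c u prems)
    (hi : prems[i]? = some (c₁, none)) (hj : prems[j]? = some (c₂, none)) : i = j := by
  cases h with
  | ax _ | unk_ax | rule _ => simp at hi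
  | unk _ _ _ => simpa using List.mem_of_getElem? hi
  | prop _ _ =>
    rw [List.eq_length_of_getElem?_append_singleton (by simp) hi,
      List.eq_length_of_getElem?_append_singleton (by simp) hj]

end URule

namespace PTree.IsProofTree

variable {S : BigStep C} {τ : PTree C}

lemma parent_unknown (h : τ.IsProofTree S) {α : List ℕ+} {n : ℕ+} {c : C}
    (hc : τ.label (α ++ [n]) = some (c, none)) : ∃ c' : C, τ.label α = some (c', none) := by
  obtain ⟨p, hp⟩ := Option.ne_none_iff_exists'.mp (τ.closed α n (by simp [hc]))
  obtain ⟨prems, hrule, hchildren⟩ := h α p hp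
  have hu : p.2 = none :=
    hrule.eq_none_of_mem (List.mem_of_getElem? ((hchildren n).symm.trans hc))
  exact ⟨p.1, by rw [hp, ← hu]⟩

lemma eq_of_unknown_siblings (h : τ.IsProofTree S) {α : List ℕ+} {m k : ℕ+} {d c c' : C}
    (hα : τ.label α = some (d, none)) (hm : τ.label (α ++ [m]) = some (c, none))
    (hk : τ.label (α ++ [k]) = some (c', none)) : m = k := by
  obtain ⟨prems, hrule, hchildren⟩ := h α _ hα
  exact PNat.natPred_injective <| hrule.index_eq_of_getElem?_eq_none
    ((hchildren m).symm.trans hm) ((hchildren k).symm.trans hk)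

lemma eq_of_unknown_of_length_eq (h : τ.IsProofTree S) :
    ∀ {α β : List ℕ+} {c c' : C}, α.length = β.length →
      τ.label α = some (c, none) → τ.label β = some (c', none) → α = β
  | α, β, c, c', hlen, hα, hβ => by
    rcases List.eq_nil_or_concat' α with rfl | ⟨α', m, rfl⟩
    · exact (List.length_eq_zero_iff.mp hlen.symm).symm
    rcases List.eq_nil_or_concat' β with rfl | ⟨β', k, rfl⟩
    · simp at hlen
    obtain ⟨d, hd⟩ := h.parent_unknown hα
    obtain ⟨d', hd'⟩ := h.parent_unknown hβ
    obtain rfl : α' = β' := h.eq_of_unknown_of_length_eq (by simpa using hlen) hd hd'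
    rw [h.eq_of_unknown_siblings hd hα hβ]
  termination_by α => α.length

end PTree.IsProofTree

/-- Proposition `tree-unknown`: in any proof tree of `𝓡^?`,
(1) `?` propagates from a child to its parent, and (2) at every level there is at
most one node whose result part is `?`. -/
theorem statement9 {C : Type u} (S : BigStep C) (τ : PTree C)
    (h : τ.IsProofTree S) :
    (∀ (α : List ℕ+) (n : ℕ+) (c : C), τ.label (α ++ [n]) = some (c, none) →
      ∃ c' : C, τ.label α = some (c', none)) ∧
    (∀ (n : ℕ) (α β : List ℕ+) (c c' : C), α.length = n → β.length = n →
      τ.label α = some (c, none) → τ.label β = some (c', none) → α = β) :=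
  ⟨fun _ _ _ hc => h.parent_unknown hc,
    fun _ _ _ _ _ hα hβ => h.eq_of_unknown_of_length_eq (hα.trans hβ.symm)⟩

end BigStepMeta
end
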